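/- Let k : ℝ⁴ → ℝ be any smooth function (coordinates (θ,x₁,x₂,x₃)), and define the bracket {f,g} = k·(x₁(∂₂f·∂₃g − ∂₃f·∂₂g) + x₂(∂₁f·∂₃g − ∂₃f·∂₁g) − x₃(∂₁f·∂₂g − ∂₂f·∂₁g)) for smooth f,g : ℝ⁴ → ℝ. Then this bracket satisfies the Jacobi identity {f,{g,h}} + {g,{h,f}} + {h,{f,g}} = 0 for all smooth f,g,h. -/

import Mathlib

/-- Partial derivative of `f : ℝ⁴ → ℝ` in the `i`-th coordinate direction;
index `0` is θ and indices `1,2,3` are x₁,x₂,x₃. -/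
noncomputable def pd (i : Fin 4) (f : (Fin 4 → ℝ) → ℝ) (x : Fin 4 → ℝ) : ℝ :=
  fderiv ℝ f x (Pi.single i 1)

/-- The broken-Lefschetz-fibration fold-circle bracket with conformal factor `k`:
the bracket of the bivector `π_Γ = k·(x₁ ∂₂∧∂₃ + x₂ ∂₁∧∂₃ − x₃ ∂₁∧∂₂)`. -/
noncomputable def foldBracket (k : (Fin 4 → ℝ) → ℝ)
    (f g : (Fin 4 → ℝ) → ℝ) : (Fin 4 → ℝ) → ℝ :=
  fun x =>
    k x * (x 1 * (pd 2 f x * pd 3 g x - pd 3 f x * pd 2 g x)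
      + x 2 * (pd 1 f x * pd 3 g x - pd 3 f x * pd 1 g x)
      - x 3 * (pd 1 f x * pd 2 g x - pd 2 f x * pd 1 g x))

@[fun_prop]
lemma pd_contDiff {f : (Fin 4 → ℝ) → ℝ} (hf : ContDiff ℝ (⊤ : ℕ∞) f) (i : Fin 4) :
    ContDiff ℝ (⊤ : ℕ∞) (pd i f) := by
  unfold pd
  exact (hf.fderiv_right le_rfl).clm_apply contDiff_const

@[fun_prop]
lemma pd_differentiable {f : (Fin 4 → ℝ) → ℝ} (hf : ContDiff ℝ (⊤ : ℕ∞) f) (i : Fin 4) :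
    Differentiable ℝ (pd i f) :=
  (pd_contDiff hf i).differentiable (by norm_cast)

lemma pd_mul {f g : (Fin 4 → ℝ) → ℝ} {x : Fin 4 → ℝ} (i : Fin 4)
    (hf : DifferentiableAt ℝ f x) (hg : DifferentiableAt ℝ g x) :
    pd i (fun y => f y * g y) x = pd i f x * g x + f x * pd i g x := by
  unfold pd; rw [fderiv_fun_mul hf hg]; simp; ring

lemma pd_add {f g : (Fin 4 → ℝ) → ℝ} {x : Fin 4 → ℝ} (i : Fin 4)
    (hf : DifferentiableAt ℝ f x) (hg : DifferentiableAt ℝ g x) :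
    pd i (fun y => f y + g y) x = pd i f x + pd i g x := by
  unfold pd; rw [fderiv_fun_add hf hg]; simp

lemma pd_sub {f g : (Fin 4 → ℝ) → ℝ} {x : Fin 4 → ℝ} (i : Fin 4)
    (hf : DifferentiableAt ℝ f x) (hg : DifferentiableAt ℝ g x) :
    pd i (fun y => f y - g y) x = pd i f x - pd i g x := by
  unfold pd; rw [fderiv_fun_sub hf hg]; simp

lemma pd_coord (i j : Fin 4) (x : Fin 4 → ℝ) :
    pd i (fun y => y j) x = if j = i then 1 else 0 := by
  unfold pd
  have : (fun y : Fin 4 → ℝ => y j) = (ContinuousLinearMap.proj j : (Fin 4 → ℝ) →L[ℝ] ℝ) := rfl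
  rw [this, ContinuousLinearMap.fderiv]
  simp [Pi.single_apply]

lemma pd_pd_comm {f : (Fin 4 → ℝ) → ℝ} (hf : ContDiff ℝ (⊤ : ℕ∞) f) (i j : Fin 4)
    (x : Fin 4 → ℝ) : pd i (pd j f) x = pd j (pd i f) x := by
  have hs : IsSymmSndFDerivAt ℝ f x :=
    hf.contDiffAt.isSymmSndFDerivAt (by rw [minSmoothness_of_isRCLikeNormedField]; exact WithTop.coe_le_coe.mpr le_top)
  have hd : DifferentiableAt ℝ (fderiv ℝ f) x :=
    ((hf.fderiv_right (m := ((⊤ : ℕ∞) : WithTop ℕ∞)) le_rfl).differentiable (by norm_cast)) x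
  unfold pd
  rw [fderiv_clm_apply hd (differentiableAt_const _),
      fderiv_clm_apply hd (differentiableAt_const _)]
  simp [hs.eq]

lemma foldBracket_def (k f g : (Fin 4 → ℝ) → ℝ) :
    foldBracket k f g = fun x =>
    k x * (x 1 * (pd 2 f x * pd 3 g x - pd 3 f x * pd 2 g x)
      + x 2 * (pd 1 f x * pd 3 g x - pd 3 f x * pd 1 g x)
      - x 3 * (pd 1 f x * pd 2 g x - pd 2 f x * pd 1 g x)) := rfl

set_option maxHeartbeats 4000000 in
/-- The fold-circle bracket satisfies the Jacobi identity for any smooth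
conformal factor `k`. -/
theorem foldBracket_jacobi (k : (Fin 4 → ℝ) → ℝ) (hk : ContDiff ℝ (⊤ : ℕ∞) k)
    (f g h : (Fin 4 → ℝ) → ℝ)
    (hf : ContDiff ℝ (⊤ : ℕ∞) f) (hg : ContDiff ℝ (⊤ : ℕ∞) g)
    (hh : ContDiff ℝ (⊤ : ℕ∞) h) (x : Fin 4 → ℝ) :
    foldBracket k f (foldBracket k g h) x
      + foldBracket k g (foldBracket k h f) x
      + foldBracket k h (foldBracket k f g) x = 0 := by
  have hk' : Differentiable ℝ k := hk.differentiable (by norm_cast)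
  have hf' : Differentiable ℝ f := hf.differentiable (by norm_cast)
  have hg' : Differentiable ℝ g := hg.differentiable (by norm_cast)
  have hh' : Differentiable ℝ h := hh.differentiable (by norm_cast)
  simp (disch := fun_prop) only [foldBracket_def, pd_mul, pd_add, pd_sub, pd_coord]
  simp only [Fin.reduceEq, reduceIte]
  have s : ∀ u, ContDiff ℝ (⊤ : ℕ∞) u → ∀ i j : Fin 4,
      pd i (pd j u) x = pd j (pd i u) x := fun u hu i j => pd_pd_comm hu i j x
  simp only [s f hf 2 1, s f hf 3 1, s f hf 3 2, s g hg 2 1, s g hg 3 1, s g hg 3 2,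
    s h hh 2 1, s h hh 3 1, s h hh 3 2]
  ring
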